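/- If 𝔡 = 𝔠 (the least cardinality of a ≤*-dominating family in ω^ω equals the cardinality of the continuum), then for every finite family ℱ of finitary operations on ω^ω there exists a ⟨𝔡, ℱ, 𝔠⟩-pathway. -/

import Mathlib

/-! Enumerate `ω^ω` as `⟨e β : β < 𝔠⟩` and let the `α`-th set be the closure of `{e β : β < α}`
under `𝓕`. Closing a set under finitely many finitary operations adds at most `ℵ₀` elements, so
every set has size `< 𝔠 = 𝔡` and is not dominating; since the closure is finitary, the sequence
is continuous at limits. -/

open Cardinal Set

/-- A subset `S` is closed under a finitary operation `F` (presented as a pair of an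
arity `n` and a function `(Fin n → B) → B`). -/
def ClosedUnderOp {B : Type*} (S : Set B) (F : Σ n : ℕ, (Fin n → B) → B) : Prop :=
  ∀ v : Fin F.1 → B, (∀ i, v i ∈ S) → F.2 v ∈ S

/-- `IsPathway E 𝓕 δ seq` says that `⟨seq α : α < δ⟩` is a
`⟨⟨A,B,E⟩, 𝓕, δ⟩`-pathway: an increasing continuous sequence of subsets of `B`
whose union is all of `B`, such that no `seq α` is `E`-dominating, and with each
`seq α` closed under every operation in `𝓕`. -/
structure IsPathway {A B : Type*} (E : A → B → Prop)
    (𝓕 : Set (Σ n : ℕ, (Fin n → B) → B)) (δ : Ordinal)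
    (seq : Ordinal → Set B) : Prop where
  mono : ∀ α β : Ordinal, α ≤ β → β < δ → seq α ⊆ seq β
  cont : ∀ γ : Ordinal, γ < δ → Order.IsSuccLimit γ → seq γ = ⋃ α : Ordinal, ⋃ _ : α < γ, seq α
  total : (⋃ α : Ordinal, ⋃ _ : α < δ, seq α) = Set.univ
  avoid : ∀ α : Ordinal, α < δ → ∃ x : A, ∀ y ∈ seq α, ¬ E x y
  closedF : ∀ α : Ordinal, α < δ → ∀ F ∈ 𝓕, ClosedUnderOp (seq α) F

/-- The evaluation of the triple `⟨A, B, E⟩`: the least cardinality of an `E`-dominating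
family `X ⊆ B`, i.e. of an `X` such that every `a ∈ A` is `E`-related to some `b ∈ X`. -/
noncomputable def evalTriple {A B : Type u} (E : A → B → Prop) : Cardinal.{u} :=
  sInf {c | ∃ X : Set B, #X = c ∧ ∀ a : A, ∃ b ∈ X, E a b}

/-- The eventual domination relation `f ≤* g` on `ω^ω`. -/
def evDomLE (f g : ℕ → ℕ) : Prop := ∀ᶠ n in Filter.atTop, f n ≤ g n

/-- The dominating number `𝔡`: the least cardinality of a `≤*`-dominating family. -/
noncomputable def dNumber : Cardinal :=
  sInf {c | ∃ D : Set (ℕ → ℕ), #D = c ∧ ∀ f : ℕ → ℕ, ∃ g ∈ D, evDomLE f g}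

open FirstOrder Language

universe u v

section Operations

variable {B : Type v} (𝓕 : Set (Σ n : ℕ, (Fin n → B) → B))

/-- Encodes `𝓕` as a first-order language, so that substructure closure (which comes with a
cardinality bound and is finitary) is closure under the operations in `𝓕`. -/
def opsLanguage : FirstOrder.Language.{v, 0} where
  Functions n := {g : (Fin n → B) → B // ⟨n, g⟩ ∈ 𝓕}
  Relations _ := Empty

instance : (opsLanguage 𝓕).Structure B where
  funMap g v := g.1 v
  RelMap r := Empty.elim r

theorem FirstOrder.Language.Substructure.closedUnderOp (S : (opsLanguage 𝓕).Substructure B)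
    {F} (hF : F ∈ 𝓕) : ClosedUnderOp (S : Set B) F :=
  fun v hv => S.fun_mem (⟨F.2, hF⟩ : (opsLanguage 𝓕).Functions F.1) v hv

theorem card_sigma_opsLanguage_functions_lt (h𝓕 : 𝓕.Finite) :
    #(Σ n, (opsLanguage 𝓕).Functions n) < ℵ₀ := by
  refine (mk_le_of_injective (f := fun g => (⟨⟨g.1, g.2.1⟩, g.2.2⟩ : 𝓕)) ?_).trans_lt
    h𝓕.lt_aleph0
  rintro ⟨_, _, _⟩ ⟨_, _, _⟩ h
  cases h
  rfl

theorem card_closure_opsLanguage_le (h𝓕 : 𝓕.Finite) (s : Set B) :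
    #(Substructure.closure (opsLanguage 𝓕) s) ≤ max ℵ₀ #s := by
  have := Substructure.lift_card_closure_le (L := opsLanguage 𝓕) (s := s)
  simp only [lift_id] at this
  have hfun := card_sigma_opsLanguage_functions_lt 𝓕 h𝓕
  refine this.trans (max_le le_sup_left ((add_le_max _ _).trans ?_))
  exact max_le (max_le le_sup_right (hfun.le.trans le_sup_left)) le_sup_left

end Operations

section Enumeration

variable {B : Type v}

theorem exists_forall_exists_lt_ord_eq [Nonempty B] {κ : Cardinal.{u}}
    (hB : lift.{u} #B ≤ lift.{v} κ) : ∃ e : Ordinal.{u} → B, ∀ b, ∃ β < κ.ord, e β = b := by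
  have hle : lift.{u + 1} #B ≤ lift.{v} #(Iio κ.ord) := by
    rw [Cardinal.mk_Iio_ordinal, card_ord]
    simpa using lift_le.{u + 1}.mpr hB
  obtain ⟨i⟩ := lift_mk_le'.mp hle
  have hi : Function.Injective fun b => (i b : Ordinal) := Subtype.val_injective.comp i.injective
  exact ⟨Function.invFun _, fun b => ⟨i b, (i b).2, Function.leftInverse_invFun hi b⟩⟩

theorem lift_card_image_Iio_le (e : Ordinal.{u} → B) (α : Ordinal.{u}) :
    lift.{u} #(e '' Iio α) ≤ lift.{v} α.card := by
  have := mk_image_le_lift (f := e) (s := Iio α)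
  rw [Cardinal.mk_Iio_ordinal] at this
  rw [← lift_le.{u + 1}]
  simpa using this

end Enumeration

section ClosureSeq

variable {B : Type v} (𝓕 : Set (Σ n : ℕ, (Fin n → B) → B)) (e : Ordinal.{u} → B)

def closureSeq (α : Ordinal.{u}) : Set B :=
  Substructure.closure (opsLanguage 𝓕) (e '' Iio α)

theorem closureSeq_mono : Monotone (closureSeq 𝓕 e) :=
  fun _ _ h => Substructure.closure_mono (image_mono (Iio_subset_Iio h))

theorem closureSeq_eq_iUnion {γ : Ordinal.{u}} (hγ : Order.IsSuccLimit γ) :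
    closureSeq 𝓕 e γ = ⋃ α, ⋃ _ : α < γ, closureSeq 𝓕 e α := by
  have : Nonempty (Iio γ) := ⟨⟨⊥, hγ.bot_lt⟩⟩
  have hdir : Directed (· ≤ ·) fun α : Iio γ =>
      Substructure.closure (opsLanguage 𝓕) (e '' Iio (α : Ordinal)) :=
    Monotone.directed_le fun _ _ h => Substructure.closure_mono (image_mono (Iio_subset_Iio h))
  ext x
  rw [closureSeq, ← hγ.isLUB_Iio.biUnion_Iio_eq, biUnion_eq_iUnion, image_iUnion,
    Substructure.closure_iUnion, SetLike.mem_coe, Substructure.mem_iSup_of_directed hdir]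
  simp [closureSeq]

theorem lift_card_closureSeq_le (h𝓕 : 𝓕.Finite) (α : Ordinal.{u}) :
    lift.{u} #(closureSeq 𝓕 e α) ≤ max ℵ₀ (lift.{v} α.card) :=
  calc lift.{u} #(closureSeq 𝓕 e α) ≤ lift.{u} (max ℵ₀ #(e '' Iio α)) :=
        lift_le.mpr (card_closure_opsLanguage_le 𝓕 h𝓕 _)
    _ = max ℵ₀ (lift.{u} #(e '' Iio α)) := by simp
    _ ≤ max ℵ₀ (lift.{v} α.card) := max_le_max le_rfl (lift_card_image_Iio_le e α)

theorem isPathway_closureSeq {A : Type*} (E : A → B → Prop) (h𝓕 : 𝓕.Finite) {κ : Cardinal.{u}}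
    (hκ : ℵ₀ < κ) (he : ∀ b, ∃ β < κ.ord, e β = b)
    (hE : ∀ X : Set B, lift.{u} #X < lift.{v} κ → ∃ a, ∀ b ∈ X, ¬ E a b) :
    IsPathway E 𝓕 κ.ord (closureSeq 𝓕 e) where
  mono _ _ h _ := closureSeq_mono 𝓕 e h
  cont _ _ hγ := closureSeq_eq_iUnion 𝓕 e hγ
  total := eq_univ_of_forall fun b => by
    obtain ⟨β, hβ, rfl⟩ := he b
    exact mem_iUnion₂.mpr ⟨Order.succ β, (isSuccLimit_ord hκ.le).succ_lt hβ,
      Substructure.subset_closure ⟨β, Order.lt_succ β, rfl⟩⟩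
  avoid α hα := hE _ <| (lift_card_closureSeq_le 𝓕 e h𝓕 α).trans_lt <|
    max_lt (by simpa using hκ) (lift_lt.mpr (lt_ord.mp hα))
  closedF _ _ _ hF := Substructure.closedUnderOp 𝓕 _ hF

end ClosureSeq

theorem exists_isPathway_ord {A : Type*} {B : Type v} (E : A → B → Prop)
    {𝓕 : Set (Σ n : ℕ, (Fin n → B) → B)} (h𝓕 : 𝓕.Finite) {κ : Cardinal.{u}} (hκ : ℵ₀ < κ)
    (hB : lift.{u} #B = lift.{v} κ) (hE : ∀ X : Set B, #X < #B → ∃ a, ∀ b ∈ X, ¬ E a b) :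
    ∃ seq : Ordinal.{u} → Set B, IsPathway E 𝓕 κ.ord seq := by
  have : Nonempty B := mk_ne_zero_iff.mp fun h0 => by
    rw [h0, lift_zero, eq_comm, lift_eq_zero] at hB
    exact (aleph0_pos.trans hκ).ne' hB
  obtain ⟨e, he⟩ := exists_forall_exists_lt_ord_eq hB.le
  exact ⟨_, isPathway_closureSeq 𝓕 e E h𝓕 hκ he fun X hX => hE X (by rwa [← hB, lift_lt] at hX)⟩

theorem exists_not_evDomLE_of_card_lt_dNumber {X : Set (ℕ → ℕ)} (hX : #X < dNumber) :
    ∃ f, ∀ g ∈ X, ¬ evDomLE f g := by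
  by_contra! h
  exact hX.not_ge (csInf_le' ⟨X, rfl, h⟩)

theorem mk_nat_fun_nat : #(ℕ → ℕ) = 𝔠 := by
  rw [← power_def, mk_nat, aleph0_power_aleph0]

/-- if `𝔡 = 𝔠`, then for every finite family `𝓕` of finitary operations on
`ω^ω` there exists a `⟨𝔡, 𝓕, 𝔠⟩`-pathway. -/
theorem stmt13 (h : dNumber = Cardinal.continuum)
    (𝓕 : Set (Σ n : ℕ, (Fin n → (ℕ → ℕ)) → (ℕ → ℕ))) (h𝓕 : 𝓕.Finite) :
    ∃ seq : Ordinal → Set (ℕ → ℕ),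
      IsPathway evDomLE 𝓕 Cardinal.continuum.ord seq :=
  exists_isPathway_ord evDomLE h𝓕 aleph0_lt_continuum
    (by rw [mk_nat_fun_nat, lift_continuum, lift_continuum])
    fun _ hX => exists_not_evDomLE_of_card_lt_dNumber (by rwa [h, ← mk_nat_fun_nat])
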